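/- Let G be a noncyclic finite p-group of order n. Then sdim(Γ_G) = n − max{s_i : 1 ≤ i ≤ t}, where M₁,...,M_t are the maximal cyclic subgroups of G and s_i is the number of distinct subgroups of the form M_i ∩ M_j (j = 1,...,t). -/

import Mathlib

/-- Closed neighborhood of a vertex. -/
def SimpleGraph.closedNbhd {V : Type*} (Γ : SimpleGraph V) (x : V) : Set V :=
  insert x (Γ.neighborSet x)

/-- `z` strongly resolves `x` and `y`: some shortest path from `z` to `x` contains `y`,
or some shortest path from `z` to `y` contains `x`. -/
def SimpleGraph.StronglyResolves {V : Type*} (Γ : SimpleGraph V) (z x y : V) : Prop :=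
  Γ.dist z y + Γ.dist y x = Γ.dist z x ∨ Γ.dist z x + Γ.dist x y = Γ.dist z y

def SimpleGraph.IsStrongResolvingSet {V : Type*} (Γ : SimpleGraph V) (S : Set V) : Prop :=
  ∀ x y : V, x ≠ y → ∃ z ∈ S, Γ.StronglyResolves z x y

/-- Strong metric dimension. -/
noncomputable def SimpleGraph.sdim {V : Type*} (Γ : SimpleGraph V) : ℕ :=
  sInf {k | ∃ S : Set V, Γ.IsStrongResolvingSet S ∧ S.ncard = k}

/-- Equivalence: equal closed neighborhoods. -/
def SimpleGraph.nbhdSetoid {V : Type*} (Γ : SimpleGraph V) : Setoid V :=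
  ⟨fun x y => Γ.closedNbhd x = Γ.closedNbhd y,
   ⟨fun _ => rfl, Eq.symm, Eq.trans⟩⟩

/-- The reduced graph of `Γ`. -/
def SimpleGraph.reduced {V : Type*} (Γ : SimpleGraph V) :
    SimpleGraph (Quotient Γ.nbhdSetoid) where
  Adj a b := a ≠ b ∧ ∃ x y : V,
    Quotient.mk Γ.nbhdSetoid x = a ∧ Quotient.mk Γ.nbhdSetoid y = b ∧ Γ.Adj x y
  symm := by
    constructor
    rintro a b ⟨h, x, y, hx, hy, hxy⟩
    exact ⟨h.symm, y, x, hy, hx, hxy.symm⟩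
  loopless := by constructor; rintro a ⟨h, -⟩; exact h rfl

/-- The power graph of a group. -/
def powerGraph (G : Type*) [Group G] : SimpleGraph G where
  Adj x y := x ≠ y ∧ (x ∈ Subgroup.zpowers y ∨ y ∈ Subgroup.zpowers x)
  symm := by constructor; rintro x y ⟨h, h2⟩; exact ⟨h.symm, h2.symm⟩
  loopless := by constructor; rintro x ⟨h, -⟩; exact h rfl

/-- `σ n`: 1 if `n` is a prime power, otherwise the sum of the exponents in the
prime factorization of `n`. -/
noncomputable def sigmaExp (n : ℕ) : ℕ :=
  if IsPrimePow n then 1 else n.factorization.sum fun _ k => k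

/-- A maximal cyclic subgroup. -/
def IsMaxCyclic {G : Type*} [Group G] (M : Subgroup G) : Prop :=
  IsCyclic M ∧ ∀ N : Subgroup G, IsCyclic N → M ≤ N → M = N

/-- The set `𝓜_p` of maximal cyclic subgroups that are `p`-groups. -/
def maxCycP (p : ℕ) (G : Type*) [Group G] : Set (Subgroup G) :=
  {M | IsMaxCyclic M ∧ IsPGroup p M}

/-- The set of intersections of `M` with members of `𝓜_p`. -/
def inters (p : ℕ) {G : Type*} [Group G] (M : Subgroup G) : Set (Subgroup G) :=
  {C | ∃ N ∈ maxCycP p G, C = M ⊓ N}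

/-- `s_i`: the number of distinct intersections. -/
noncomputable def sNum (p : ℕ) {G : Type*} [Group G] (M : Subgroup G) : ℕ :=
  Nat.card (inters p M)

open Classical in
/-- `λ_i`, defined by `p ^ λ_i = max {|M ⊓ N| : N maximal cyclic, not a p-group}`
if maximal cyclic non-`p`-subgroups exist, and `λ_i = -1` otherwise. -/
noncomputable def lamInt (p : ℕ) {G : Type*} [Group G] (M : Subgroup G) : ℤ :=
  if {N : Subgroup G | IsMaxCyclic N ∧ ¬ IsPGroup p N}.Nonempty then
    (padicValNat p (sSup {k | ∃ N : Subgroup G, IsMaxCyclic N ∧ ¬ IsPGroup p N ∧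
        k = Nat.card ↥(M ⊓ N)}) : ℤ)
  else -1

/-- `s_i'`: the least index `u` with `p ^ λ_i < |C_{iu}|` in the chain of intersections;
equivalently one more than the number of intersections of cardinality at most `p ^ λ_i`. -/
noncomputable def sPrimeNum (p : ℕ) {G : Type*} [Group G] (M : Subgroup G) : ℕ :=
  Nat.card {C | C ∈ inters p M ∧ (Nat.card ↥C : ℚ) ≤ (p : ℚ) ^ (lamInt p M)} + 1

noncomputable def alphaTerm (p : ℕ) {G : Type*} [Group G] (M : Subgroup G) : ℤ :=
  (sNum p M : ℤ) - (sPrimeNum p M : ℤ) + lamInt p M + 2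

/-- `α_p = max_i (s_i - s_i' + λ_i + 2)`, with `α_p = 0` when `𝓜_p = ∅`. -/
noncomputable def alphaP (p : ℕ) (G : Type*) [Group G] : ℤ :=
  sSup (alphaTerm p '' maxCycP p G)

/-- A CP-group: every nonidentity element has prime power order. -/
def IsCPGroup (G : Type*) [Group G] : Prop :=
  ∀ g : G, g ≠ 1 → IsPrimePow (orderOf g)



/-!
Any two elements of a group are joined through the identity, so `Γ_G` has diameter at most two.
In such a graph a vertex `z ∉ {x, y}` strongly resolves `x, y` exactly when `x, y` are adjacent
and `z` separates their closed neighbourhoods; hence `S` is strong resolving iff its complement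
is a clique of pairwise non-twins, and `sdim = n - ω` with `ω` the largest size of such a clique.

In a `p`-group the subgroups of a cyclic subgroup form a chain, so the closed neighbourhood of
`x` is the union of the maximal cyclic subgroups containing `x`, and is determined by which of
them contain `x`. A twin-free clique lies in one maximal cyclic `M`, and sending each vertex to
the least `M ∩ M_j` containing it is injective; conversely generators of the distinct
`M ∩ M_j` form a twin-free clique. So `ω = max_i s_i`.
-/

namespace SimpleGraph

variable {V : Type*} (Γ : SimpleGraph V)

def IsTwinFreeClique (T : Set V) : Prop :=
  T.Pairwise fun a b => Γ.Adj a b ∧ Γ.closedNbhd a ≠ Γ.closedNbhd b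

variable {Γ}

lemma IsTwinFreeClique.isClique {T : Set V} (hT : Γ.IsTwinFreeClique T) : Γ.IsClique T :=
  hT.imp fun _ _ h => h.1

lemma mem_closedNbhd_iff {x z : V} : z ∈ Γ.closedNbhd x ↔ z = x ∨ Γ.Adj x z := Iff.rfl

lemma self_mem_closedNbhd (x : V) : x ∈ Γ.closedNbhd x := Set.mem_insert x _

lemma stronglyResolves_comm {z x y : V} :
    Γ.StronglyResolves z x y ↔ Γ.StronglyResolves z y x :=
  Or.comm

lemma stronglyResolves_self_left (x y : V) : Γ.StronglyResolves x x y :=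
  Or.inr (by rw [dist_self, zero_add])

lemma stronglyResolves_self_right (x y : V) : Γ.StronglyResolves y x y :=
  stronglyResolves_comm.mpr (stronglyResolves_self_left y x)

lemma reachable_of_ediam_le_two (hΓ : Γ.ediam ≤ 2) (u v : V) : Γ.Reachable u v :=
  edist_ne_top_iff_reachable.mp (edist_le_ediam.trans_lt (hΓ.trans_lt (by decide))).ne

lemma dist_le_two_of_ediam_le_two (hΓ : Γ.ediam ≤ 2) (u v : V) : Γ.dist u v ≤ 2 := by
  have h : Γ.edist u v ≤ 2 := edist_le_ediam.trans hΓ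
  rw [← (reachable_of_ediam_le_two hΓ u v).coe_dist_eq_edist] at h
  exact_mod_cast h

lemma dist_eq_one_of_mem_closedNbhd {u v : V} (h : u ∈ Γ.closedNbhd v) (hne : u ≠ v) :
    Γ.dist u v = 1 :=
  dist_eq_one_iff_adj.mpr (h.resolve_left hne).symm

lemma dist_eq_two_of_notMem_closedNbhd (hΓ : Γ.ediam ≤ 2) {u v : V}
    (h : u ∉ Γ.closedNbhd v) : Γ.dist u v = 2 := by
  have h0 : Γ.dist u v ≠ 0 := fun h0 =>
    h (Or.inl ((reachable_of_ediam_le_two hΓ u v).dist_eq_zero_iff.mp h0))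
  have h1 : Γ.dist u v ≠ 1 := fun h1 => h (Or.inr (dist_eq_one_iff_adj.mp h1).symm)
  have := dist_le_two_of_ediam_le_two hΓ u v
  omega

lemma StronglyResolves.eq_or_eq_of_not_adj (hΓ : Γ.ediam ≤ 2) {z x y : V}
    (h : Γ.StronglyResolves z x y) (hne : x ≠ y) (hxy : ¬Γ.Adj x y) : z = x ∨ z = y := by
  have hx : Γ.dist x y = 2 := dist_eq_two_of_notMem_closedNbhd hΓ
    (by rintro (h | h); exacts [hne h, hxy h.symm])
  have hy : Γ.dist y x = 2 := dist_comm.trans hx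
  have hzx := dist_le_two_of_ediam_le_two hΓ z x
  have hzy := dist_le_two_of_ediam_le_two hΓ z y
  have hreach := reachable_of_ediam_le_two hΓ z
  rcases h with h | h
  · exact Or.inr ((hreach y).dist_eq_zero_iff.mp (by omega))
  · exact Or.inl ((hreach x).dist_eq_zero_iff.mp (by omega))

lemma StronglyResolves.eq_or_eq_of_closedNbhd_eq (hΓ : Γ.ediam ≤ 2) {z x y : V}
    (h : Γ.StronglyResolves z x y) (hxy : Γ.Adj x y) (htwin : Γ.closedNbhd x = Γ.closedNbhd y) :
    z = x ∨ z = y := by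
  by_contra! hz
  have hdist : Γ.dist z x = Γ.dist z y := by
    by_cases hzN : z ∈ Γ.closedNbhd x
    · rw [dist_eq_one_of_mem_closedNbhd hzN hz.1,
        dist_eq_one_of_mem_closedNbhd (htwin ▸ hzN) hz.2]
    · rw [dist_eq_two_of_notMem_closedNbhd hΓ hzN,
        dist_eq_two_of_notMem_closedNbhd hΓ (htwin ▸ hzN)]
  have hx : Γ.dist x y = 1 := dist_eq_one_iff_adj.mpr hxy
  have hy : Γ.dist y x = 1 := dist_eq_one_iff_adj.mpr hxy.symm
  unfold StronglyResolves at h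
  omega

lemma stronglyResolves_of_mem_closedNbhd_of_notMem (hΓ : Γ.ediam ≤ 2) {z x y : V}
    (hxy : Γ.Adj x y) (hzx : z ∈ Γ.closedNbhd x) (hzy : z ∉ Γ.closedNbhd y) :
    Γ.StronglyResolves z x y := by
  have hne : z ≠ x := by
    rintro rfl
    exact hzy (Or.inr hxy.symm)
  refine Or.inr ?_
  rw [dist_eq_one_of_mem_closedNbhd hzx hne, dist_eq_one_iff_adj.mpr hxy,
    dist_eq_two_of_notMem_closedNbhd hΓ hzy]

theorem isStrongResolvingSet_iff_isTwinFreeClique_compl (hΓ : Γ.ediam ≤ 2) {S : Set V} :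
    Γ.IsStrongResolvingSet S ↔ Γ.IsTwinFreeClique Sᶜ := by
  constructor
  · intro hS x hx y hy hne
    obtain ⟨z, hzS, hz⟩ := hS x y hne
    have hzxy : ¬(z = x ∨ z = y) := by rintro (rfl | rfl) <;> contradiction
    have hxy : Γ.Adj x y := by
      by_contra hxy
      exact hzxy (hz.eq_or_eq_of_not_adj hΓ hne hxy)
    exact ⟨hxy, fun htwin => hzxy (hz.eq_or_eq_of_closedNbhd_eq hΓ hxy htwin)⟩
  · intro hT x y hne
    by_cases hx : x ∈ S
    · exact ⟨x, hx, stronglyResolves_self_left x y⟩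
    by_cases hy : y ∈ S
    · exact ⟨y, hy, stronglyResolves_self_right x y⟩
    obtain ⟨hxy, htwin⟩ := hT hx hy hne
    -- every vertex of `Sᶜ` other than `b` is adjacent to `b`, so `N[a] \ N[b] ⊆ S`
    have key : ∀ {a b : V}, a ∉ S → b ∉ S → Γ.Adj a b →
        ∀ z ∈ Γ.closedNbhd a, z ∉ Γ.closedNbhd b → z ∈ S ∧ Γ.StronglyResolves z a b := by
      intro a b ha hb hab z hza hzb
      refine ⟨?_, stronglyResolves_of_mem_closedNbhd_of_notMem hΓ hab hza hzb⟩
      by_contra hz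
      have hzb' : z ≠ b := fun h => hzb (h ▸ self_mem_closedNbhd z)
      exact hzb (Or.inr (hT hb hz hzb'.symm).1)
    obtain ⟨z, hzx, hzy⟩ | ⟨z, hzy, hzx⟩ : (∃ z ∈ Γ.closedNbhd x, z ∉ Γ.closedNbhd y) ∨
        (∃ z ∈ Γ.closedNbhd y, z ∉ Γ.closedNbhd x) := by
      by_contra! h
      exact htwin (Set.Subset.antisymm h.1 h.2)
    · exact ⟨z, key hx hy hxy z hzx hzy⟩
    · obtain ⟨hzS, hz⟩ := key hy hx hxy.symm z hzy hzx
      exact ⟨z, hzS, stronglyResolves_comm.mpr hz⟩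

theorem sdim_add_ncard_eq [Finite V] (hΓ : Γ.ediam ≤ 2) {T : Set V}
    (hT : Γ.IsTwinFreeClique T) (hmax : ∀ T', Γ.IsTwinFreeClique T' → T'.ncard ≤ T.ncard) :
    Γ.sdim + T.ncard = Nat.card V := by
  have hsdim : Γ.sdim = Nat.card V - T.ncard := by
    refine IsLeast.csInf_eq ⟨⟨Tᶜ, ?_, ?_⟩, ?_⟩
    · rwa [isStrongResolvingSet_iff_isTwinFreeClique_compl hΓ, compl_compl]
    · rw [← Set.ncard_add_ncard_compl T]
      omega
    · rintro _ ⟨S, hS, rfl⟩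
      have := hmax _ ((isStrongResolvingSet_iff_isTwinFreeClique_compl hΓ).mp hS)
      have := Set.ncard_add_ncard_compl S
      omega
  have := Set.ncard_add_ncard_compl T
  omega

end SimpleGraph

open Subgroup

section CyclicPGroup

variable {G : Type*} [Group G]

theorem IsCyclic.mem_zpowers_of_orderOf_dvd [Finite G] [IsCyclic G] {x z : G}
    (h : orderOf x ∣ orderOf z) : x ∈ zpowers z := by
  classical
  have := Fintype.ofFinite G
  -- `zpowers z` has `orderOf z` elements, all roots of `a ^ orderOf z = 1`, and a cyclic group
  -- has at most `orderOf z` such roots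
  have hsub : (zpowers z : Set G).toFinset ⊆ ({a | a ^ orderOf z = 1} : Finset G) := fun a ha => by
    simpa using orderOf_dvd_iff_pow_eq_one.mp (orderOf_dvd_of_mem_zpowers (by simpa using ha))
  have heq := Finset.eq_of_subset_of_card_le hsub (by
    rw [Set.toFinset_card, ← Nat.card_eq_fintype_card, SetLike.coe_sort_coe, Nat.card_zpowers]
    exact IsCyclic.card_pow_eq_one_le (orderOf_pos z))
  have hx : x ∈ ({a | a ^ orderOf z = 1} : Finset G) := by
    simpa using orderOf_dvd_iff_pow_eq_one.mp h
  simpa [← heq] using hx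

lemma mem_zpowers_of_orderOf_dvd_of_mem_zpowers [Finite G] {x y z : G} (hx : x ∈ zpowers y)
    (hz : z ∈ zpowers y) (h : orderOf x ∣ orderOf z) : x ∈ zpowers z := by
  have h' : (⟨x, hx⟩ : zpowers y) ∈ zpowers (⟨z, hz⟩ : zpowers y) :=
    IsCyclic.mem_zpowers_of_orderOf_dvd (by simpa only [← Subgroup.orderOf_coe] using h)
  obtain ⟨k, hk⟩ := mem_zpowers_iff.mp h'
  exact mem_zpowers_iff.mpr ⟨k, congrArg Subtype.val hk⟩

variable {p : ℕ} [Fact p.Prime]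

lemma IsPGroup.mem_zpowers_or_mem_zpowers [Finite G] (hpg : IsPGroup p G) {x y z : G}
    (hx : x ∈ zpowers y) (hz : z ∈ zpowers y) : x ∈ zpowers z ∨ z ∈ zpowers x := by
  obtain ⟨a, ha⟩ := IsPGroup.iff_orderOf.mp hpg x
  obtain ⟨b, hb⟩ := IsPGroup.iff_orderOf.mp hpg z
  rcases le_total a b with hab | hab
  · exact Or.inl (mem_zpowers_of_orderOf_dvd_of_mem_zpowers hx hz
      (ha ▸ hb ▸ pow_dvd_pow p hab))
  · exact Or.inr (mem_zpowers_of_orderOf_dvd_of_mem_zpowers hz hx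
      (ha ▸ hb ▸ pow_dvd_pow p hab))

lemma IsPGroup.le_or_le_of_le_zpowers [Finite G] (hpg : IsPGroup p G) {C D : Subgroup G} {y : G}
    (hC : C ≤ zpowers y) (hD : D ≤ zpowers y) : C ≤ D ∨ D ≤ C := by
  obtain ⟨m, rfl⟩ := (le_zpowers_iff y C).mp hC
  obtain ⟨n, rfl⟩ := (le_zpowers_iff y D).mp hD
  exact (hpg.mem_zpowers_or_mem_zpowers (npow_mem_zpowers y m) (npow_mem_zpowers y n)).imp
    zpowers_le_of_mem zpowers_le_of_mem

end CyclicPGroup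

section PowerGraph

variable {G : Type*} [Group G]

lemma exists_isMaxCyclic_mem [Finite G] (x : G) : ∃ M : Subgroup G, IsMaxCyclic M ∧ x ∈ M := by
  obtain ⟨M, ⟨hMc, hxM⟩, hmax⟩ := Set.Finite.exists_maximal (Set.toFinite
    {K : Subgroup G | IsCyclic K ∧ x ∈ K}) ⟨zpowers x, isCyclic_zpowers x, mem_zpowers x⟩
  exact ⟨M, ⟨hMc, fun N hN hMN => le_antisymm hMN (hmax ⟨hN, hMN hxM⟩ hMN)⟩, hxM⟩

lemma IsMaxCyclic.exists_zpowers_eq {M : Subgroup G} (hM : IsMaxCyclic M) :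
    ∃ y : G, zpowers y = M :=
  (M.isCyclic_iff_exists_zpowers_eq_top).mp hM.1

lemma IsMaxCyclic.mem_of_le_zpowers {M : Subgroup G} (hM : IsMaxCyclic M) {b : G}
    (h : M ≤ zpowers b) : b ∈ M :=
  (hM.2 _ (isCyclic_zpowers b) h) ▸ mem_zpowers b

lemma powerGraph_adj_iff {x y : G} :
    (powerGraph G).Adj x y ↔ x ≠ y ∧ (x ∈ zpowers y ∨ y ∈ zpowers x) := Iff.rfl

lemma mem_closedNbhd_powerGraph_iff {x z : G} :
    z ∈ (powerGraph G).closedNbhd x ↔ x ∈ zpowers z ∨ z ∈ zpowers x := by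
  rw [SimpleGraph.mem_closedNbhd_iff, powerGraph_adj_iff]
  by_cases hzx : z = x
  · simp [hzx]
  · simp [hzx, Ne.symm hzx]

lemma powerGraph_ediam_le_two : (powerGraph G).ediam ≤ 2 := by
  have hone : ∀ u : G, (powerGraph G).edist u 1 ≤ 1 := fun u => by
    by_cases hu : u = 1
    · simp [hu]
    · exact (SimpleGraph.edist_eq_one_iff_adj.mpr
        (powerGraph_adj_iff.mpr ⟨hu, Or.inr (one_mem _)⟩)).le
  refine SimpleGraph.ediam_le_of_edist_le fun u v => ?_
  calc (powerGraph G).edist u v ≤ (powerGraph G).edist u 1 + (powerGraph G).edist 1 v :=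
        SimpleGraph.edist_triangle
    _ ≤ 1 + 1 := by
        gcongr
        · exact hone u
        · rw [SimpleGraph.edist_comm]; exact hone v
    _ = 2 := by norm_num

lemma exists_isMaxCyclic_subset_of_isClique [Finite G] {T : Set G}
    (hT : (powerGraph G).IsClique T) : ∃ M : Subgroup G, IsMaxCyclic M ∧ T ⊆ M := by
  rcases T.eq_empty_or_nonempty with rfl | hne
  · obtain ⟨M, hM, -⟩ := exists_isMaxCyclic_mem (1 : G)
    exact ⟨M, hM, Set.empty_subset _⟩
  -- `t₀` with `zpowers t₀` maximal is a power of no other element of `T`, so by adjacency every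
  -- element of `T` is a power of `t₀`
  obtain ⟨t₀, ht₀, hmax⟩ := (Set.toFinite T).exists_maximalFor (fun t => zpowers t) T hne
  obtain ⟨M, hM, ht₀M⟩ := exists_isMaxCyclic_mem t₀
  refine ⟨M, hM, fun t ht => zpowers_le_of_mem ht₀M ?_⟩
  by_cases h : t = t₀
  · exact h ▸ mem_zpowers t
  rcases (powerGraph_adj_iff.mp (hT ht₀ ht (Ne.symm h))).2 with h' | h'
  · exact hmax ht (zpowers_le_of_mem h') (mem_zpowers t)
  · exact h'

variable {p : ℕ} [Fact p.Prime] [Finite G]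

lemma IsPGroup.mem_closedNbhd_powerGraph_iff_exists (hpg : IsPGroup p G) {x z : G} :
    z ∈ (powerGraph G).closedNbhd x ↔ ∃ N : Subgroup G, IsMaxCyclic N ∧ x ∈ N ∧ z ∈ N := by
  rw [mem_closedNbhd_powerGraph_iff]
  constructor
  · rintro (h | h)
    · obtain ⟨N, hN, hzN⟩ := exists_isMaxCyclic_mem z
      exact ⟨N, hN, zpowers_le_of_mem hzN h, hzN⟩
    · obtain ⟨N, hN, hxN⟩ := exists_isMaxCyclic_mem x
      exact ⟨N, hN, hxN, zpowers_le_of_mem hxN h⟩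
  · rintro ⟨N, hN, hxN, hzN⟩
    obtain ⟨y, rfl⟩ := hN.exists_zpowers_eq
    exact hpg.mem_zpowers_or_mem_zpowers hxN hzN

lemma IsPGroup.closedNbhd_powerGraph_eq_iff (hpg : IsPGroup p G) {a b : G} :
    (powerGraph G).closedNbhd a = (powerGraph G).closedNbhd b ↔
      ∀ N : Subgroup G, IsMaxCyclic N → (a ∈ N ↔ b ∈ N) := by
  constructor
  · -- a generator `y` of `N` lies in `N[a] = N[b]`, so either `b ∈ N` or `N ≤ zpowers b`
    have key : ∀ {a b : G}, (powerGraph G).closedNbhd a = (powerGraph G).closedNbhd b →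
        ∀ N : Subgroup G, IsMaxCyclic N → a ∈ N → b ∈ N := by
      intro a b h N hN haN
      obtain ⟨y, rfl⟩ := hN.exists_zpowers_eq
      have hy : y ∈ (powerGraph G).closedNbhd b :=
        h ▸ mem_closedNbhd_powerGraph_iff.mpr (Or.inl haN)
      rcases mem_closedNbhd_powerGraph_iff.mp hy with hb | hb
      · exact hb
      · exact hN.mem_of_le_zpowers (zpowers_le_of_mem hb)
    exact fun h N hN => ⟨key h N hN, key h.symm N hN⟩
  · intro h
    ext z
    simp only [hpg.mem_closedNbhd_powerGraph_iff_exists]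
    exact exists_congr fun N => and_congr_right fun hN => and_congr_left' (h N hN)

end PowerGraph

section Intersections

variable {G : Type*} [Group G]

def maxCyclicInters (M : Subgroup G) : Set (Subgroup G) :=
  {C | ∃ N : Subgroup G, IsMaxCyclic N ∧ C = M ⊓ N}

lemma self_mem_maxCyclicInters {M : Subgroup G} (hM : IsMaxCyclic M) : M ∈ maxCyclicInters M :=
  ⟨M, hM, (inf_idem M).symm⟩

lemma le_of_mem_maxCyclicInters {M C : Subgroup G} (hC : C ∈ maxCyclicInters M) : C ≤ M := by
  obtain ⟨N, -, rfl⟩ := hC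
  exact inf_le_left

lemma mem_iff_le_of_isLeast_maxCyclicInters {M C N : Subgroup G} {t : G} (ht : t ∈ M)
    (hC : IsLeast {D | D ∈ maxCyclicInters M ∧ t ∈ D} C) (hN : IsMaxCyclic N) :
    t ∈ N ↔ C ≤ N :=
  ⟨fun htN => (hC.2 ⟨⟨N, hN, rfl⟩, mem_inf.mpr ⟨ht, htN⟩⟩).trans inf_le_right,
    fun h => h hC.1.2⟩

variable [Finite G] {p : ℕ} [Fact p.Prime]

lemma IsPGroup.exists_isLeast_maxCyclicInters (hpg : IsPGroup p G) {M : Subgroup G}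
    (hM : IsMaxCyclic M) {t : G} (ht : t ∈ M) :
    ∃ C, IsLeast {D | D ∈ maxCyclicInters M ∧ t ∈ D} C := by
  obtain ⟨y, rfl⟩ := hM.exists_zpowers_eq
  obtain ⟨C, hC, hmin⟩ := Set.Finite.exists_minimal (Set.toFinite _)
    (⟨_, self_mem_maxCyclicInters hM, ht⟩ : {D | D ∈ maxCyclicInters (zpowers y) ∧ t ∈ D}.Nonempty)
  refine ⟨C, hC, fun D hD => ?_⟩
  rcases hpg.le_or_le_of_le_zpowers (le_of_mem_maxCyclicInters hC.1)
    (le_of_mem_maxCyclicInters hD.1) with h | h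
  · exact h
  · exact hmin hD h

lemma IsPGroup.exists_isMaxCyclic_ncard_le (hpg : IsPGroup p G) {T : Set G}
    (hT : (powerGraph G).IsTwinFreeClique T) :
    ∃ M : Subgroup G, IsMaxCyclic M ∧ T.ncard ≤ (maxCyclicInters M).ncard := by
  obtain ⟨M, hM, hTM⟩ := exists_isMaxCyclic_subset_of_isClique hT.isClique
  have hleast : ∀ t ∈ T, ∃ C, IsLeast {D | D ∈ maxCyclicInters M ∧ t ∈ D} C :=
    fun t ht => hpg.exists_isLeast_maxCyclicInters hM (hTM ht)
  choose! f hf using hleast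
  refine ⟨M, hM, Set.ncard_le_ncard_of_injOn f (fun t ht => (hf t ht).1.1) ?_⟩
  intro a ha b hb hab
  by_contra hne
  refine (hT ha hb hne).2 (hpg.closedNbhd_powerGraph_eq_iff.mpr fun N hN => ?_)
  rw [mem_iff_le_of_isLeast_maxCyclicInters (hTM ha) (hf a ha) hN,
    mem_iff_le_of_isLeast_maxCyclicInters (hTM hb) (hf b hb) hN, hab]

lemma IsPGroup.exists_isTwinFreeClique_ncard_eq (hpg : IsPGroup p G) {M : Subgroup G}
    (hM : IsMaxCyclic M) :
    ∃ T : Set G, (powerGraph G).IsTwinFreeClique T ∧ T.ncard = (maxCyclicInters M).ncard := by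
  have : IsCyclic M := hM.1
  have hgen : ∀ C ∈ maxCyclicInters M, ∃ g, zpowers g = C := fun C hC =>
    C.isCyclic_iff_exists_zpowers_eq_top.mp (isCyclic_of_le (le_of_mem_maxCyclicInters hC))
  choose! g hg using hgen
  have hgC : ∀ C ∈ maxCyclicInters M, g C ∈ C := fun C hC => (hg C hC).le (mem_zpowers (g C))
  have hgM : ∀ C ∈ maxCyclicInters M, g C ∈ M := fun C hC =>
    le_of_mem_maxCyclicInters hC (hgC C hC)
  -- if `D = M ⊓ N` then `g D ∈ N`, and a twin of `g D` inside `M` lies in `M ⊓ N = D`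
  have key : ∀ C ∈ maxCyclicInters M, ∀ D ∈ maxCyclicInters M,
      (∀ N : Subgroup G, IsMaxCyclic N → g D ∈ N → g C ∈ N) → C ≤ D := by
    rintro C hC D ⟨N, hN, rfl⟩ h
    rw [← hg C hC, zpowers_le]
    exact mem_inf.mpr ⟨hgM C hC, h N hN (mem_inf.mp (hgC _ ⟨N, hN, rfl⟩)).2⟩
  have hinj : Set.InjOn g (maxCyclicInters M) := fun C hC D hD h =>
    (hg C hC).symm.trans (h ▸ hg D hD)
  refine ⟨g '' maxCyclicInters M, ?_, hinj.ncard_image⟩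
  rintro _ ⟨C, hC, rfl⟩ _ ⟨D, hD, rfl⟩ hne
  obtain ⟨y, rfl⟩ := hM.exists_zpowers_eq
  refine ⟨powerGraph_adj_iff.mpr ⟨hne, hpg.mem_zpowers_or_mem_zpowers (hgM C hC) (hgM D hD)⟩,
    fun htwin => hne (congrArg g ?_)⟩
  have hiff := hpg.closedNbhd_powerGraph_eq_iff.mp htwin
  exact le_antisymm (key C hC D hD fun N hN => (hiff N hN).mpr)
    (key D hD C hC fun N hN => (hiff N hN).mp)

end Intersections

theorem stmt_11_general {G : Type*} [Group G] [Finite G] (p : ℕ) (hp : p.Prime)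
    (hpg : IsPGroup p G) :
    ((powerGraph G).sdim : ℤ) = (Nat.card G : ℤ) -
      (sSup ((fun M : Subgroup G =>
        Nat.card {C : Subgroup G | ∃ N : Subgroup G, IsMaxCyclic N ∧ C = M ⊓ N}) ''
        {M : Subgroup G | IsMaxCyclic M}) : ℤ) := by
  have : Fact p.Prime := ⟨hp⟩
  obtain ⟨M₀, hM₀, -⟩ := exists_isMaxCyclic_mem (1 : G)
  obtain ⟨M, hM, hmax⟩ := Set.exists_max_image {M : Subgroup G | IsMaxCyclic M}
    (fun M => (maxCyclicInters M).ncard) (Set.toFinite _) ⟨M₀, hM₀⟩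
  obtain ⟨T, hT, hTcard⟩ := hpg.exists_isTwinFreeClique_ncard_eq hM
  have hsdim := (powerGraph G).sdim_add_ncard_eq powerGraph_ediam_le_two hT fun T' hT' => by
    obtain ⟨N, hN, hle⟩ := hpg.exists_isMaxCyclic_ncard_le hT'
    exact hle.trans (hTcard ▸ hmax N hN)
  have hsup : sSup ((fun M : Subgroup G => ((maxCyclicInters M).ncard : ℤ)) ''
      {M : Subgroup G | IsMaxCyclic M}) = (maxCyclicInters M).ncard :=
    IsGreatest.csSup_eq ⟨⟨M, hM, rfl⟩, by rintro _ ⟨N, hN, rfl⟩; exact Nat.cast_le.mpr (hmax N hN)⟩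
  change _ = _ - sSup ((fun M : Subgroup G => ((maxCyclicInters M).ncard : ℤ)) '' _)
  rw [hsup, ← hTcard, ← hsdim]
  push_cast
  ring

theorem stmt_11 {G : Type*} [Group G] [Finite G] (p : ℕ) (hp : p.Prime)
    (hpg : IsPGroup p G) (hnc : ¬ IsCyclic G) :
    ((powerGraph G).sdim : ℤ) = (Nat.card G : ℤ) -
      (sSup ((fun M : Subgroup G =>
        Nat.card {C : Subgroup G | ∃ N : Subgroup G, IsMaxCyclic N ∧ C = M ⊓ N}) ''
        {M : Subgroup G | IsMaxCyclic M}) : ℤ) :=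
  stmt_11_general p hp hpg
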